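/- Let A be a commutative unital complex normed algebra, α(x) monic of degree n over A, B = A[x]/(α(x)) with an Arens-Hoffman norm of parameter t. Then the continuous character space Ω(B) is homeomorphic to the closed subset {(h, λ) ∈ Ω(A) × Δ_t : Σ_{k=0}^{n} h(a_k) λ^k = 0} of Ω(A) × Δ_t (where a_n = 1), via H ↦ (H ∘ ν′, H(x̄)). -/

import Mathlib

open Polynomial WeakDual

/-- The Arens–Hoffman weighted norm on `A[x]`:
`‖Σ_{k=0}^p c_k x^k‖ := Σ_{k=0}^p ‖c_k‖ t^k`. -/
noncomputable def ahNorm {A : Type*} [NormedCommRing A] (t : ℝ) (p : Polynomial A) : ℝ :=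
  ∑ k ∈ Finset.range (p.natDegree + 1), ‖p.coeff k‖ * t ^ k

/-- The quotient (Arens–Hoffman) norm on `A[x]⧸I`. -/
noncomputable def ahQuotNorm {A : Type*} [NormedCommRing A] (t : ℝ)
    (I : Ideal (Polynomial A)) (b : Polynomial A ⧸ I) : ℝ :=
  sInf (ahNorm t '' {p : Polynomial A | Ideal.Quotient.mk I p = b})

/-- The continuous characters of the Arens–Hoffman extension `B = A[x]/(α(x))`:
unital `ℂ`-algebra homomorphisms `B → ℂ` that are bounded for the Arens–Hoffman quotient
norm, regarded as a set of functions `B → ℂ` (carrying the topology of pointwise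
convergence, i.e. the weak-* topology). -/
def ahQuotCharSet (A : Type*) [NormedCommRing A] [NormedAlgebra ℂ A]
    (α : Polynomial A) (t : ℝ) : Set ((Polynomial A ⧸ Ideal.span {α}) → ℂ) :=
  {H | (∃ φ : (Polynomial A ⧸ Ideal.span {α}) →ₐ[ℂ] ℂ, ⇑φ = H) ∧
       ∃ C > (0 : ℝ), ∀ b : Polynomial A ⧸ Ideal.span {α},
         ‖H b‖ ≤ C * ahQuotNorm t (Ideal.span {α}) b}

/-- The subset `{(h, λ) ∈ Ω(A) × Δ_t : Σ_{k=0}^{n} h(a_k) λ^k = 0}` of `Ω(A) × Δ_t`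
(with `a_n = 1` for monic `α` of degree `n`). -/
def ahRootPairs (A : Type*) [NormedCommRing A] [NormedAlgebra ℂ A]
    (α : Polynomial A) (t : ℝ) :
    Set (characterSpace ℂ A × Metric.closedBall (0 : ℂ) t) :=
  {p | ∑ k ∈ Finset.range (α.natDegree + 1), p.1 (α.coeff k) * (p.2 : ℂ) ^ k = 0}

section Aux

variable {A : Type*} [NormedCommRing A]

lemma ah_pow_trick {r s C : ℝ} (hr : 0 ≤ r) (hs : 0 ≤ s)
    (h : ∀ m : ℕ, 0 < m → r ^ m ≤ C * s ^ m) : r ≤ s := by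
  by_contra hlt
  push_neg at hlt
  have hr0 : 0 < r := lt_of_le_of_lt hs hlt
  rcases eq_or_lt_of_le hs with h0 | h0
  · have h1 := h 1 one_pos
    rw [← h0] at h1
    simp at h1
    nlinarith
  · have hrat : 1 < r / s := (one_lt_div h0).2 hlt
    obtain ⟨m, hm⟩ := pow_unbounded_of_one_lt C hrat
    have hmle : (r / s) ^ m ≤ (r / s) ^ (m + 1) :=
      pow_le_pow_right₀ hrat.le (Nat.le_succ m)
    have h2 := h (m + 1) (Nat.succ_pos m)
    have hspow : 0 < s ^ (m + 1) := pow_pos h0 _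
    have hm1 : C < (r / s) ^ (m + 1) := lt_of_lt_of_le hm hmle
    rw [div_pow] at hm1
    have : C * s ^ (m + 1) < r ^ (m + 1) := by
      calc C * s ^ (m + 1) < r ^ (m + 1) / s ^ (m + 1) * s ^ (m + 1) :=
            mul_lt_mul_of_pos_right hm1 hspow
        _ = r ^ (m + 1) := div_mul_cancel₀ _ hspow.ne'
    linarith

lemma ahNorm_nonneg {t : ℝ} (ht : 0 ≤ t) (p : Polynomial A) : 0 ≤ ahNorm t p :=
  Finset.sum_nonneg fun k _ => mul_nonneg (norm_nonneg _) (pow_nonneg ht k)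

lemma ahNorm_C {t : ℝ} (a : A) : ahNorm t (Polynomial.C a) = ‖a‖ := by
  simp [ahNorm]

lemma ahNorm_X_pow [NormOneClass A] {t : ℝ} (m : ℕ) :
    ahNorm t ((Polynomial.X : Polynomial A) ^ m) = t ^ m := by
  haveI : Nontrivial A := NormOneClass.nontrivial
  rw [ahNorm, Polynomial.natDegree_X_pow]
  rw [Finset.sum_eq_single m]
  · simp
  · intro k _ hk
    simp [Polynomial.coeff_X_pow, hk]
  · intro hm
    exact absurd (Finset.self_mem_range_succ m) hm

lemma ahQuotNorm_le {t : ℝ} (ht : 0 ≤ t) (I : Ideal (Polynomial A)) (p : Polynomial A) :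
    ahQuotNorm t I (Ideal.Quotient.mk I p) ≤ ahNorm t p :=
  csInf_le ⟨0, fun r ⟨q, _, hq⟩ => hq ▸ ahNorm_nonneg ht q⟩ ⟨p, rfl, rfl⟩

lemma le_ahQuotNorm {t : ℝ} {I : Ideal (Polynomial A)} {b : Polynomial A ⧸ I} {c : ℝ}
    (h : ∀ p, Ideal.Quotient.mk I p = b → c ≤ ahNorm t p) : c ≤ ahQuotNorm t I b := by
  obtain ⟨p, hp⟩ := Ideal.Quotient.mk_surjective b
  exact le_csInf ⟨ahNorm t p, ⟨p, hp, rfl⟩⟩ fun r ⟨q, hq, hr⟩ => hr ▸ h q hq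

variable [NormedAlgebra ℂ A]

lemma char_apply_le (h : characterSpace ℂ A) (a : A) : ‖h a‖ ≤ ‖a‖ := by
  set C : ℝ := max ‖WeakDual.CharacterSpace.toCLM h‖ 1 with hC
  have hC1 : (0 : ℝ) < C := lt_of_lt_of_le one_pos (le_max_right _ _)
  refine ah_pow_trick (C := C) (norm_nonneg _) (norm_nonneg a) fun m hm => ?_
  have h1 : ‖h a‖ ^ m = ‖h (a ^ m)‖ := by
    rw [map_pow, norm_pow]
  rw [h1]
  calc ‖h (a ^ m)‖ ≤ ‖WeakDual.CharacterSpace.toCLM h‖ * ‖a ^ m‖ :=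
        (WeakDual.CharacterSpace.toCLM h).le_opNorm _
    _ ≤ C * ‖a‖ ^ m :=
        mul_le_mul (le_max_left _ _) (norm_pow_le' a hm) (norm_nonneg _) hC1.le

/-- The evaluation algebra homomorphism `A[X] → ℂ`, `p ↦ Σ h(c_k) z^k`. -/
noncomputable def ahPhi (h : characterSpace ℂ A) (z : ℂ) : Polynomial A →ₐ[ℂ] ℂ :=
  (Polynomial.aeval z).comp (Polynomial.mapAlgHom (WeakDual.CharacterSpace.toAlgHom h))

lemma ahPhi_apply (h : characterSpace ℂ A) (z : ℂ) (p : Polynomial A) :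
    ahPhi h z p = ∑ k ∈ Finset.range (p.natDegree + 1), h (p.coeff k) * z ^ k := by
  have h1 : ahPhi h z p
      = Polynomial.eval₂ ((WeakDual.CharacterSpace.toAlgHom h : A →+* ℂ)) z p := by
    simp only [ahPhi, AlgHom.coe_comp, Function.comp_apply, Polynomial.coe_mapAlgHom,
      Polynomial.aeval_def, Polynomial.eval₂_map]
    rw [Algebra.algebraMap_self, RingHom.id_comp]
  rw [h1, Polynomial.eval₂_eq_sum_range]
  rfl

lemma ahPhi_C (h : characterSpace ℂ A) (z : ℂ) (a : A) :
    ahPhi h z (Polynomial.C a) = h a := by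
  simp [ahPhi]

lemma ahPhi_X (h : characterSpace ℂ A) (z : ℂ) : ahPhi h z Polynomial.X = z := by
  simp [ahPhi]

lemma ahPhi_bound {t : ℝ} (h : characterSpace ℂ A) {z : ℂ} (hz : ‖z‖ ≤ t)
    (p : Polynomial A) : ‖ahPhi h z p‖ ≤ ahNorm t p := by
  rw [ahPhi_apply, ahNorm]
  refine (norm_sum_le _ _).trans (Finset.sum_le_sum fun k _ => ?_)
  rw [norm_mul, norm_pow]
  exact mul_le_mul (char_apply_le h _) (pow_le_pow_left₀ (norm_nonneg z) hz k)
    (pow_nonneg (norm_nonneg z) k) (norm_nonneg _)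

lemma algHom_apply_eq_sum (ψ : Polynomial A →ₐ[ℂ] ℂ) (p : Polynomial A) :
    ψ p = ∑ k ∈ Finset.range (p.natDegree + 1),
      ψ (Polynomial.C (p.coeff k)) * ψ Polynomial.X ^ k := by
  conv_lhs => rw [p.as_sum_range]
  rw [map_sum]
  exact Finset.sum_congr rfl fun k _ => by
    rw [← Polynomial.C_mul_X_pow_eq_monomial, map_mul, map_pow]

lemma ahPhi_vanish {α : Polynomial A} (h : characterSpace ℂ A) (z : ℂ)
    (hroot : ∑ k ∈ Finset.range (α.natDegree + 1), h (α.coeff k) * z ^ k = 0) :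
    ∀ p ∈ Ideal.span {α}, ahPhi h z p = 0 := by
  intro p hp
  rw [Ideal.mem_span_singleton] at hp
  obtain ⟨q, rfl⟩ := hp
  rw [map_mul]
  have hz : ahPhi h z α = 0 := by rw [ahPhi_apply]; exact hroot
  rw [hz, zero_mul]

end Aux

section Maps

variable {A : Type*} [NormedCommRing A] [NormedAlgebra ℂ A] [NormOneClass A]
  {α : Polynomial A} {t : ℝ}

/-- The continuous linear map `a ↦ H(mk (C a))`. -/
noncomputable def ahFwdCLM (ht : 0 ≤ t) (H : ahQuotCharSet A α t) : WeakDual ℂ A :=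
  LinearMap.mkContinuous
    ((H.2.1.choose.comp ((Ideal.Quotient.mkₐ ℂ (Ideal.span {α})).comp
        Polynomial.CAlgHom)).toLinearMap) H.2.2.choose
    (fun a => by
      obtain ⟨hC, hbd⟩ := H.2.2.choose_spec
      have h1 : H.2.1.choose (Ideal.Quotient.mk (Ideal.span {α}) (Polynomial.C a))
          = H.1 (Ideal.Quotient.mk (Ideal.span {α}) (Polynomial.C a)) :=
        congrFun H.2.1.choose_spec _
      show ‖H.2.1.choose (Ideal.Quotient.mk (Ideal.span {α}) (Polynomial.C a))‖
          ≤ H.2.2.choose * ‖a‖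
      rw [h1]
      calc ‖H.1 (Ideal.Quotient.mk (Ideal.span {α}) (Polynomial.C a))‖
          ≤ H.2.2.choose * ahQuotNorm t (Ideal.span {α})
              (Ideal.Quotient.mk (Ideal.span {α}) (Polynomial.C a)) := hbd _
        _ ≤ H.2.2.choose * ahNorm t (Polynomial.C a) :=
            mul_le_mul_of_nonneg_left (ahQuotNorm_le ht _ _) hC.le
        _ = H.2.2.choose * ‖a‖ := by rw [ahNorm_C])

lemma ahFwdCLM_apply (ht : 0 ≤ t) (H : ahQuotCharSet A α t) (a : A) :
    ahFwdCLM ht H a = H.1 (Ideal.Quotient.mk (Ideal.span {α}) (Polynomial.C a)) :=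
  congrFun H.2.1.choose_spec _

lemma ahFwd_mem (ht : 0 ≤ t) (H : ahQuotCharSet A α t) :
    ahFwdCLM ht H ∈ characterSpace ℂ A := by
  have e1 : ahFwdCLM ht H 1 = 1 := by
    rw [ahFwdCLM_apply]
    obtain ⟨φ, hφ⟩ := H.2.1
    rw [← hφ]
    simp
  constructor
  · intro h0
    rw [h0] at e1
    have h00 : (0 : WeakDual ℂ A) (1 : A) = 0 := rfl
    rw [h00] at e1
    exact one_ne_zero e1.symm
  · intro x y
    rw [ahFwdCLM_apply, ahFwdCLM_apply, ahFwdCLM_apply]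
    obtain ⟨φ, hφ⟩ := H.2.1
    rw [← hφ]
    simp [map_mul]

/-- The forward character `h = H ∘ ν′`. -/
noncomputable def ahFwdChar (ht : 0 ≤ t) (H : ahQuotCharSet A α t) : characterSpace ℂ A :=
  ⟨ahFwdCLM ht H, ahFwd_mem ht H⟩

lemma ahFwdChar_apply (ht : 0 ≤ t) (H : ahQuotCharSet A α t) (a : A) :
    ahFwdChar ht H a = H.1 (Ideal.Quotient.mk (Ideal.span {α}) (Polynomial.C a)) :=
  ahFwdCLM_apply ht H a

lemma ahFwd_lam_le (ht : 0 ≤ t) (H : ahQuotCharSet A α t) :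
    ‖H.1 (Ideal.Quotient.mk (Ideal.span {α}) Polynomial.X)‖ ≤ t := by
  obtain ⟨⟨φ, hφ⟩, C, hC, hbd⟩ := H.2
  refine ah_pow_trick (C := C) (norm_nonneg _) ht fun m hm => ?_
  have h1 : ‖H.1 (Ideal.Quotient.mk (Ideal.span {α}) Polynomial.X)‖ ^ m
      = ‖H.1 (Ideal.Quotient.mk (Ideal.span {α}) (Polynomial.X ^ m))‖ := by
    rw [← hφ, ← norm_pow, ← map_pow, ← map_pow]
  rw [h1]
  calc ‖H.1 (Ideal.Quotient.mk (Ideal.span {α}) (Polynomial.X ^ m))‖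
      ≤ C * ahQuotNorm t (Ideal.span {α})
          (Ideal.Quotient.mk (Ideal.span {α}) (Polynomial.X ^ m)) := hbd _
    _ ≤ C * ahNorm t (Polynomial.X ^ m) :=
        mul_le_mul_of_nonneg_left (ahQuotNorm_le ht _ _) hC.le
    _ = C * t ^ m := by rw [ahNorm_X_pow]

lemma ahFwd_root (ht : 0 ≤ t) (H : ahQuotCharSet A α t) :
    ∑ k ∈ Finset.range (α.natDegree + 1), (ahFwdChar ht H) (α.coeff k)
      * (H.1 (Ideal.Quotient.mk (Ideal.span {α}) Polynomial.X)) ^ k = 0 := by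
  obtain ⟨φ, hφ⟩ := H.2.1
  have h0 : Ideal.Quotient.mk (Ideal.span {α}) α = 0 :=
    (Ideal.Quotient.eq_zero_iff_mem).2 (Ideal.mem_span_singleton_self α)
  have h1 := algHom_apply_eq_sum (φ.comp (Ideal.Quotient.mkₐ ℂ (Ideal.span {α}))) α
  simp only [AlgHom.coe_comp, Function.comp_apply, Ideal.Quotient.mkₐ_eq_mk] at h1
  rw [h0, map_zero] at h1
  have h2 : ∀ k, (ahFwdChar ht H) (α.coeff k) = φ (Ideal.Quotient.mk (Ideal.span {α})
      (Polynomial.C (α.coeff k))) := by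
    intro k
    rw [ahFwdChar_apply, ← hφ]
  have h3 : H.1 (Ideal.Quotient.mk (Ideal.span {α}) Polynomial.X)
      = φ (Ideal.Quotient.mk (Ideal.span {α}) Polynomial.X) := by rw [← hφ]
  calc ∑ k ∈ Finset.range (α.natDegree + 1), (ahFwdChar ht H) (α.coeff k)
        * (H.1 (Ideal.Quotient.mk (Ideal.span {α}) Polynomial.X)) ^ k
      = ∑ k ∈ Finset.range (α.natDegree + 1),
          φ (Ideal.Quotient.mk (Ideal.span {α}) (Polynomial.C (α.coeff k)))
          * (φ (Ideal.Quotient.mk (Ideal.span {α}) Polynomial.X)) ^ k := by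
        refine Finset.sum_congr rfl fun k _ => ?_
        rw [h2, h3]
    _ = 0 := h1.symm

/-- The backward algebra homomorphism. -/
noncomputable def ahBwdHom (x : ahRootPairs A α t) :
    (Polynomial A ⧸ Ideal.span {α}) →ₐ[ℂ] ℂ :=
  Ideal.Quotient.liftₐ _ (ahPhi x.1.1 x.1.2) (ahPhi_vanish _ _ x.2)

lemma ahBwdHom_mk (x : ahRootPairs A α t) (p : Polynomial A) :
    ahBwdHom x (Ideal.Quotient.mk (Ideal.span {α}) p) = ahPhi x.1.1 x.1.2 p := rfl

lemma ahBwd_mem (ht : 0 ≤ t) (x : ahRootPairs A α t) :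
    ⇑(ahBwdHom x) ∈ ahQuotCharSet A α t := by
  refine ⟨⟨ahBwdHom x, rfl⟩, 1, one_pos, fun b => ?_⟩
  rw [one_mul]
  refine le_ahQuotNorm fun p hp => ?_
  rw [← hp, ahBwdHom_mk]
  exact ahPhi_bound x.1.1 (mem_closedBall_zero_iff.1 x.1.2.2) p

end Maps

/-- Let `A` be a commutative unital complex normed algebra, `α(x)` monic of degree `n`
over `A`, and `B = A[x]/(α(x))` with an Arens–Hoffman norm of parameter `t`.  Then the
continuous character space `Ω(B)` is homeomorphic to the closed subset
`{(h, λ) ∈ Ω(A) × Δ_t : Σ_{k=0}^{n} h(a_k) λ^k = 0}` of `Ω(A) × Δ_t` (where `a_n = 1`),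
via `H ↦ (H ∘ ν′, H x̄)`. -/
theorem ahQuot_characterSpace_homeomorph (A : Type*) [NormedCommRing A]
    [NormedAlgebra ℂ A] [NormOneClass A]
    (α : Polynomial A) (hα : α.Monic) (hdeg : 0 < α.natDegree)
    (t : ℝ) (ht : 0 < t)
    (hparam : ∑ k ∈ Finset.range α.natDegree, ‖α.coeff k‖ * t ^ k ≤ t ^ α.natDegree) :
    IsClosed (ahRootPairs A α t) ∧
    ∃ e : ahQuotCharSet A α t ≃ₜ ahRootPairs A α t,
      ∀ H : ahQuotCharSet A α t,
        (∀ a : A, (e H).1.1 a =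
            H.1 (Ideal.Quotient.mk (Ideal.span {α}) (Polynomial.C a))) ∧
        ((e H).1.2 : ℂ) = H.1 (Ideal.Quotient.mk (Ideal.span {α}) Polynomial.X) := by
  constructor
  · -- closedness
    have heq : ahRootPairs A α t =
        (fun p : characterSpace ℂ A × Metric.closedBall (0 : ℂ) t =>
          ∑ k ∈ Finset.range (α.natDegree + 1), p.1 (α.coeff k) * (p.2 : ℂ) ^ k) ⁻¹' {0} := by
      ext p; simp [ahRootPairs]
    rw [heq]
    refine IsClosed.preimage ?_ isClosed_singleton
    refine continuous_finset_sum _ fun k _ => Continuous.mul ?_ (Continuous.pow ?_ k)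
    · exact (WeakDual.eval_continuous (α.coeff k)).comp (continuous_subtype_val.comp continuous_fst)
    · exact continuous_subtype_val.comp continuous_snd
  · -- the homeomorphism
    set fwd : ahQuotCharSet A α t → ahRootPairs A α t := fun H =>
      ⟨(ahFwdChar ht.le H, ⟨H.1 (Ideal.Quotient.mk (Ideal.span {α}) Polynomial.X),
          mem_closedBall_zero_iff.2 (ahFwd_lam_le ht.le H)⟩), ahFwd_root ht.le H⟩ with hfwd
    set bwd : ahRootPairs A α t → ahQuotCharSet A α t := fun x =>
      ⟨⇑(ahBwdHom x), ahBwd_mem ht.le x⟩ with hbwd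
    have hlinv : Function.LeftInverse bwd fwd := by
      intro H
      obtain ⟨φ, hφ⟩ := H.2.1
      refine Subtype.ext ?_
      show ⇑(ahBwdHom (fwd H)) = H.1
      rw [← hφ]
      have hEq : ahBwdHom (fwd H) = φ := ?_
      · rw [hEq]
      refine Ideal.Quotient.algHom_ext ℂ ?_
      refine Polynomial.algHom_ext' ?_ ?_
      · refine AlgHom.ext fun a => ?_
        show ahBwdHom (fwd H) (Ideal.Quotient.mk (Ideal.span {α}) (Polynomial.C a))
            = φ (Ideal.Quotient.mk (Ideal.span {α}) (Polynomial.C a))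
        rw [ahBwdHom_mk, ahPhi_C]
        show ahFwdChar ht.le H a = _
        rw [ahFwdChar_apply, ← hφ]
      · show ahBwdHom (fwd H) (Ideal.Quotient.mk (Ideal.span {α}) Polynomial.X)
            = φ (Ideal.Quotient.mk (Ideal.span {α}) Polynomial.X)
        rw [ahBwdHom_mk, ahPhi_X]
        show H.1 (Ideal.Quotient.mk (Ideal.span {α}) Polynomial.X) = _
        rw [← hφ]
    have hrinv : Function.RightInverse bwd fwd := by
      intro x
      refine Subtype.ext (Prod.ext ?_ ?_)
      · refine WeakDual.CharacterSpace.ext fun a => ?_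
        show ahFwdChar ht.le (bwd x) a = x.1.1 a
        rw [ahFwdChar_apply]
        show ahBwdHom x (Ideal.Quotient.mk (Ideal.span {α}) (Polynomial.C a)) = x.1.1 a
        rw [ahBwdHom_mk, ahPhi_C]
      · refine Subtype.ext ?_
        show (bwd x).1 (Ideal.Quotient.mk (Ideal.span {α}) Polynomial.X) = (x.1.2 : ℂ)
        show ahBwdHom x (Ideal.Quotient.mk (Ideal.span {α}) Polynomial.X) = (x.1.2 : ℂ)
        rw [ahBwdHom_mk, ahPhi_X]
    have contF : Continuous fwd := by
      refine Continuous.subtype_mk (Continuous.prodMk ?_ ?_) _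
      · refine Continuous.subtype_mk ?_ _
        refine WeakDual.continuous_of_continuous_eval fun a => ?_
        have : (fun H : ahQuotCharSet A α t => (ahFwdCLM ht.le H) a)
            = fun H : ahQuotCharSet A α t =>
                H.1 (Ideal.Quotient.mk (Ideal.span {α}) (Polynomial.C a)) :=
          funext fun H => ahFwdCLM_apply ht.le H a
        exact this ▸ (continuous_apply _).comp continuous_subtype_val
      · exact Continuous.subtype_mk ((continuous_apply _).comp continuous_subtype_val) _
    have contB : Continuous bwd := by
      refine Continuous.subtype_mk (continuous_pi fun b => ?_) _
      obtain ⟨p, hp⟩ := Ideal.Quotient.mk_surjective b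
      have hb : (fun x : ahRootPairs A α t => ahBwdHom x b)
          = fun x : ahRootPairs A α t => ∑ k ∈ Finset.range (p.natDegree + 1),
              x.1.1 (p.coeff k) * (x.1.2 : ℂ) ^ k := by
        funext x
        rw [← hp, ahBwdHom_mk, ahPhi_apply]
      show Continuous fun x : ahRootPairs A α t => ahBwdHom x b
      rw [hb]
      refine continuous_finset_sum _ fun k _ => Continuous.mul ?_ (Continuous.pow ?_ k)
      · exact (WeakDual.eval_continuous (p.coeff k)).comp
          (continuous_subtype_val.comp (continuous_fst.comp continuous_subtype_val))
      · exact continuous_subtype_val.comp (continuous_snd.comp continuous_subtype_val)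
    refine ⟨Homeomorph.mk (Equiv.mk fwd bwd hlinv hrinv) contF contB, fun H => ⟨?_, rfl⟩⟩
    intro a
    exact ahFwdChar_apply ht.le H a
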